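/- Let R = D[X;σ] with D a division ring, and suppose the bound of a nonzero f ∈ R has the form f* = d X^m ĝ with d ∈ D nonzero, m ≥ 1, and ĝ central with nonzero constant term. Then X divides f on the right: f = g X^m for some g ∈ R whose bound is d ĝ. -/

import Mathlib

/-!
Write the bound as `b = d ĝ X^m = q f`. If `q(0) ≠ 0`, then since the constant term is
multiplicative, comparing coefficients degree by degree shows that `X^m` divides `f` on the
right. If `q(0) = 0`, then `q = X q'` (as `X` is normal), and cancelling `X` from
`X (σ⁻¹(d) ĝ X^(m-1)) = b = X q' f` puts `c = σ⁻¹(d) ĝ X^(m-1)` in `Rf`. But `Rc` is twosided,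
so it lies in `Rb ⊆ RX^m`, which is impossible as `c` has a nonzero coefficient in degree
`m - 1`. Once `f = g X^m`, the normal right regular factor `X^m` cancels from the bound.
-/

/-- An Ore extension `R = D[X;σ,δ]`: `R` is a ring containing `D` via `C`, with a
distinguished element `X`, which is a free left `D`-module on the powers of `X`
(encoded by the coefficient equivalence `e`), subject to `X·a = σ(a)·X + δ(a)`,
where `δ` is a `σ`-derivation. -/
structure OreExt (D : Type*) [DivisionRing D] (σ : D ≃+* D) (δ : D → D)
    (R : Type*) [Ring R] where
  C : D →+* R
  X : R
  e : R ≃+ (ℕ →₀ D)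
  e_symm_single : ∀ (n : ℕ) (d : D), e.symm (Finsupp.single n d) = C d * X ^ n
  X_mul_C : ∀ a : D, X * C a = C (σ a) * X + C (δ a)
  δ_add : ∀ a b : D, δ (a + b) = δ a + δ b
  δ_mul : ∀ a b : D, δ (a * b) = σ a * δ b + δ a * b

namespace OreExt

variable {D R : Type*} [DivisionRing D] [Ring R] {σ : D ≃+* D} {δ : D → D}

/-- Degree, with `deg 0 = ⊥` (i.e. `-∞`). -/
noncomputable def deg (O : OreExt D σ δ R) (f : R) : WithBot ℕ := (O.e f).support.max

/-- Degree as a natural number (`0` for the zero polynomial). -/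
noncomputable def ndeg (O : OreExt D σ δ R) (f : R) : ℕ := WithBot.unbotD 0 ((O.e f).support.max)

/-- Leading coefficient. -/
noncomputable def lc (O : OreExt D σ δ R) (f : R) : D := O.e f (O.ndeg f)

/-- `f` is irreducible: it has positive degree and in any factorization one of the two
factors is a constant (an element of `D`). -/
def IrreducibleOre (O : OreExt D σ δ R) (f : R) : Prop :=
  0 < O.ndeg f ∧ ∀ g h : R, f = g * h → (∃ d : D, g = O.C d) ∨ (∃ d : D, h = O.C d)

end OreExt

/-- A left ideal is twosided. -/
def IsTwoSidedIdeal' {R : Type*} [Ring R] (I : Ideal R) : Prop :=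
  ∀ x ∈ I, ∀ r : R, x * r ∈ I

/-- `b` is a bound of `f`: the left ideal `Rb` is twosided and is the largest twosided
ideal contained in `Rf`. -/
def IsBound {R : Type*} [Ring R] (f b : R) : Prop :=
  Ideal.span {b} ≤ Ideal.span {f} ∧ IsTwoSidedIdeal' (Ideal.span {b}) ∧
    ∀ J : Ideal R, IsTwoSidedIdeal' J → J ≤ Ideal.span {f} → J ≤ Ideal.span {b}

section NormalElement

variable {R : Type*} [Ring R]

def IsNormalElement (x : R) : Prop :=
  (∀ r : R, ∃ s, x * r = s * x) ∧ ∀ r : R, ∃ s, r * x = x * s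

theorem IsNormalElement.one : IsNormalElement (1 : R) :=
  ⟨fun r => ⟨r, by simp⟩, fun r => ⟨r, by simp⟩⟩

theorem IsNormalElement.mul {x y : R} (hx : IsNormalElement x) (hy : IsNormalElement y) :
    IsNormalElement (x * y) := by
  refine ⟨fun r => ?_, fun r => ?_⟩
  · obtain ⟨s, hs⟩ := hy.1 r
    obtain ⟨t, ht⟩ := hx.1 s
    exact ⟨t, by rw [mul_assoc, hs, ← mul_assoc, ht, mul_assoc]⟩
  · obtain ⟨s, hs⟩ := hx.2 r
    obtain ⟨t, ht⟩ := hy.2 s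
    exact ⟨t, by rw [← mul_assoc, hs, mul_assoc, ht, mul_assoc]⟩

theorem IsNormalElement.pow {x : R} (hx : IsNormalElement x) (k : ℕ) :
    IsNormalElement (x ^ k) := by
  induction k with
  | zero => simpa using IsNormalElement.one
  | succ k ih => simpa [pow_succ] using ih.mul hx

theorem isTwoSidedIdeal'_span_singleton_iff {y : R} :
    IsTwoSidedIdeal' (Ideal.span {y}) ↔ ∀ r : R, ∃ u, y * r = u * y := by
  refine ⟨fun h r => ?_, fun h x hx r => ?_⟩
  · obtain ⟨u, hu⟩ := Ideal.mem_span_singleton'.mp (h y (Ideal.mem_span_singleton_self y) r)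
    exact ⟨u, hu.symm⟩
  · obtain ⟨v, rfl⟩ := Ideal.mem_span_singleton'.mp hx
    obtain ⟨u, hu⟩ := h r
    exact Ideal.mem_span_singleton'.mpr ⟨v * u, by rw [mul_assoc v y, hu, mul_assoc]⟩

theorem isTwoSidedIdeal'_span_unit_mul_central {u z : R} (hu : IsUnit u)
    (hz : z ∈ Subring.center R) : IsTwoSidedIdeal' (Ideal.span {u * z}) := by
  obtain ⟨u, rfl⟩ := hu
  refine isTwoSidedIdeal'_span_singleton_iff.mpr fun r => ⟨u * r * ↑u⁻¹, ?_⟩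
  rw [mul_assoc, ← Subring.mem_center_iff.mp hz r, mul_assoc, Units.inv_mul_cancel_left,
    mul_assoc]

theorem isTwoSidedIdeal'_span_mul_normal {y x : R} (hy : IsTwoSidedIdeal' (Ideal.span {y}))
    (hx : IsNormalElement x) : IsTwoSidedIdeal' (Ideal.span {y * x}) := by
  refine isTwoSidedIdeal'_span_singleton_iff.mpr fun r => ?_
  obtain ⟨s, hs⟩ := hx.1 r
  obtain ⟨u, hu⟩ := isTwoSidedIdeal'_span_singleton_iff.mp hy s
  exact ⟨u, by rw [mul_assoc, hs, ← mul_assoc, hu, mul_assoc]⟩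

theorem IsBound.of_mul_right {g b x : R} (hx : IsNormalElement x) (hreg : IsRightRegular x)
    (hb : IsBound (g * x) (b * x)) : IsBound g b := by
  obtain ⟨hle, htwo, hmax⟩ := hb
  refine ⟨?_, ?_, fun J hJ hJg => ?_⟩
  · obtain ⟨q, hq⟩ := Ideal.mem_span_singleton'.mp (hle (Ideal.mem_span_singleton_self _))
    refine Ideal.span_le.mpr (Set.singleton_subset_iff.mpr ?_)
    exact Ideal.mem_span_singleton'.mpr ⟨q, hreg (by simp only [← hq, mul_assoc])⟩
  · refine isTwoSidedIdeal'_span_singleton_iff.mpr fun r => ?_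
    obtain ⟨s, hs⟩ := hx.2 r
    obtain ⟨u, hu⟩ := isTwoSidedIdeal'_span_singleton_iff.mp htwo s
    exact ⟨u, hreg (by simp only [mul_assoc, hs]; rw [← mul_assoc, hu])⟩
  · set Jx : Ideal R := Submodule.map (LinearMap.toSpanSingleton R R x) J
    have hJx : ∀ {y}, y ∈ Jx ↔ ∃ z ∈ J, z * x = y := by
      intro y; simp [Jx]
    have hJx_two : IsTwoSidedIdeal' Jx := by
      intro y hy r
      obtain ⟨z, hzJ, rfl⟩ := hJx.mp hy
      obtain ⟨s, hs⟩ := hx.1 r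
      exact hJx.mpr ⟨z * s, hJ z hzJ s, by rw [mul_assoc, mul_assoc, hs]⟩
    have hJx_le : Jx ≤ Ideal.span {g * x} := by
      intro y hy
      obtain ⟨z, hzJ, rfl⟩ := hJx.mp hy
      obtain ⟨a, rfl⟩ := Ideal.mem_span_singleton'.mp (hJg hzJ)
      exact Ideal.mem_span_singleton'.mpr ⟨a, (mul_assoc a g x).symm⟩
    intro z hz
    obtain ⟨u, hu⟩ := Ideal.mem_span_singleton'.mp (hmax Jx hJx_two hJx_le (hJx.mpr ⟨z, hz, rfl⟩))
    exact Ideal.mem_span_singleton'.mpr ⟨u, hreg (by simp only [← hu, mul_assoc])⟩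

end NormalElement

namespace OreExt

variable {D R : Type*} [DivisionRing D] [Ring R] {σ : D ≃+* D}
variable (O : OreExt D σ (fun _ => 0) R)

theorem e_monomial (n : ℕ) (a : D) : O.e (O.C a * O.X ^ n) = Finsupp.single n a := by
  rw [← O.e_symm_single, AddEquiv.apply_symm_apply]

theorem e_C (a : D) : O.e (O.C a) = Finsupp.single 0 a := by
  simpa using O.e_monomial 0 a

theorem X_mul_C' (a : D) : O.X * O.C a = O.C (σ a) * O.X := by
  simpa using O.X_mul_C a

theorem induction_on {P : R → Prop} (r : R) (add : ∀ r s, P r → P s → P (r + s))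
    (monomial : ∀ (n : ℕ) (a : D), P (O.C a * O.X ^ n)) : P r := by
  rw [← O.e.symm_apply_apply r]
  induction O.e r using Finsupp.induction with
  | zero => simpa using monomial 0 0
  | single_add n a φ _ _ ih =>
    rw [map_add, O.e_symm_single]
    exact add _ _ (monomial n a) ih

theorem coeff_C_mul (a : D) (r : R) (n : ℕ) : O.e (O.C a * r) n = a * O.e r n := by
  induction r using O.induction_on with
  | add r s hr hs => simp only [mul_add, map_add, Finsupp.add_apply, hr, hs]
  | monomial i b =>
    rw [← mul_assoc, ← map_mul, e_monomial, e_monomial, Finsupp.single_apply,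
      Finsupp.single_apply]
    split_ifs <;> simp

theorem coeff_mul_X_pow_add (r : R) (k n : ℕ) : O.e (r * O.X ^ k) (n + k) = O.e r n := by
  induction r using O.induction_on with
  | add r s hr hs => simp only [add_mul, map_add, Finsupp.add_apply, hr, hs]
  | monomial i a =>
    rw [mul_assoc, ← pow_add, e_monomial, e_monomial, Finsupp.single_apply,
      Finsupp.single_apply]
    simp

theorem coeff_mul_X_pow_self (r : R) (k : ℕ) : O.e (r * O.X ^ k) k = O.e r 0 := by
  simpa using O.coeff_mul_X_pow_add r k 0

theorem coeff_mul_X_pow_of_lt (r : R) {k n : ℕ} (h : n < k) : O.e (r * O.X ^ k) n = 0 := by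
  induction r using O.induction_on with
  | add r s hr hs => simp only [add_mul, map_add, Finsupp.add_apply, hr, hs, add_zero]
  | monomial i a =>
    rw [mul_assoc, ← pow_add, e_monomial, Finsupp.single_eq_of_ne]
    omega

theorem X_mul_monomial (a : D) (n : ℕ) :
    O.X * (O.C a * O.X ^ n) = O.C (σ a) * O.X ^ (n + 1) := by
  rw [← mul_assoc, X_mul_C', mul_assoc, ← pow_succ']

theorem coeff_X_mul_zero (r : R) : O.e (O.X * r) 0 = 0 := by
  induction r using O.induction_on with
  | add r s hr hs => simp only [mul_add, map_add, Finsupp.add_apply, hr, hs, add_zero]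
  | monomial i a => rw [X_mul_monomial, e_monomial, Finsupp.single_eq_of_ne (by omega)]

theorem coeff_X_mul_succ (r : R) (n : ℕ) : O.e (O.X * r) (n + 1) = σ (O.e r n) := by
  induction r using O.induction_on with
  | add r s hr hs => simp only [mul_add, map_add, Finsupp.add_apply, hr, hs]
  | monomial i a =>
    rw [X_mul_monomial, e_monomial, e_monomial, Finsupp.single_apply, Finsupp.single_apply]
    split_ifs <;> simp_all

theorem mem_span_X_pow_iff {r : R} {k : ℕ} :
    r ∈ Ideal.span {O.X ^ k} ↔ ∀ i < k, O.e r i = 0 := by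
  refine ⟨fun h i hi => ?_, fun h => Ideal.mem_span_singleton'.mpr ?_⟩
  · obtain ⟨g, rfl⟩ := Ideal.mem_span_singleton'.mp h
    exact O.coeff_mul_X_pow_of_lt g hi
  · have hinj : Set.InjOn (· + k) ((· + k) ⁻¹' ↑(O.e r).support) :=
      fun a _ b _ hab => by simpa using hab
    refine ⟨O.e.symm (Finsupp.comapDomain (· + k) (O.e r) hinj), O.e.injective ?_⟩
    ext n
    rcases lt_or_ge n k with hn | hn
    · rw [O.coeff_mul_X_pow_of_lt _ hn, h n hn]
    · obtain ⟨j, rfl⟩ := Nat.exists_eq_add_of_le' hn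
      rw [O.coeff_mul_X_pow_add, AddEquiv.apply_symm_apply, Finsupp.comapDomain_apply]

theorem isNormalElement_X : IsNormalElement O.X := by
  refine ⟨fun r => ?_, fun r => ⟨O.e.symm ((O.e r).mapRange σ.symm (map_zero _)), ?_⟩⟩
  · obtain ⟨s, hs⟩ := Ideal.mem_span_singleton'.mp <| (O.mem_span_X_pow_iff (k := 1)).mpr
      fun i hi => by rw [Nat.lt_one_iff.mp hi, coeff_X_mul_zero]
    exact ⟨s, by rw [← hs, pow_one]⟩
  · refine O.e.injective (Finsupp.ext fun n => ?_)
    cases n with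
    | zero => rw [coeff_X_mul_zero, ← pow_one O.X, O.coeff_mul_X_pow_of_lt _ one_pos]
    | succ n =>
      rw [coeff_X_mul_succ, AddEquiv.apply_symm_apply, Finsupp.mapRange_apply,
        RingEquiv.apply_symm_apply, ← pow_one O.X, O.coeff_mul_X_pow_add]

theorem isLeftRegular_X : IsLeftRegular O.X := by
  intro a b h
  refine O.e.injective (Finsupp.ext fun n => σ.injective ?_)
  rw [← coeff_X_mul_succ, ← coeff_X_mul_succ]
  exact congrArg (O.e · (n + 1)) h

theorem isRightRegular_X_pow (k : ℕ) : IsRightRegular (O.X ^ k) := by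
  intro a b h
  refine O.e.injective (Finsupp.ext fun n => ?_)
  rw [← O.coeff_mul_X_pow_add a k, ← O.coeff_mul_X_pow_add b k]
  exact congrArg (O.e · (n + k)) h

theorem coeff_zero_mul (r s : R) : O.e (r * s) 0 = O.e r 0 * O.e s 0 := by
  obtain ⟨r', hr'⟩ := Ideal.mem_span_singleton'.mp <|
    (O.mem_span_X_pow_iff (r := r - O.C (O.e r 0)) (k := 1)).mpr fun i hi => by
      simp [Nat.lt_one_iff.mp hi, e_C]
  obtain ⟨s', hs'⟩ := O.isNormalElement_X.1 s
  have hrs : r * s = O.C (O.e r 0) * s + r' * s' * O.X ^ 1 := by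
    rw [pow_one, mul_assoc, ← hs', ← mul_assoc, ← pow_one O.X, hr', sub_mul, add_sub_cancel]
  rw [hrs, map_add, Finsupp.add_apply, coeff_C_mul, O.coeff_mul_X_pow_of_lt _ one_pos, add_zero]

theorem mem_span_X_pow_of_mul_mem {q f : R} (hq : O.e q 0 ≠ 0) {k : ℕ}
    (h : q * f ∈ Ideal.span {O.X ^ k}) : f ∈ Ideal.span {O.X ^ k} := by
  induction k with
  | zero => simp
  | succ k ih =>
    have hqf := O.mem_span_X_pow_iff.mp h
    obtain ⟨g, rfl⟩ := Ideal.mem_span_singleton'.mp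
      (ih (O.mem_span_X_pow_iff.mpr fun i hi => hqf i (by omega)))
    have hg0 : O.e g 0 = 0 := by
      have hk := hqf k (by omega)
      rw [← mul_assoc, coeff_mul_X_pow_self, coeff_zero_mul] at hk
      exact (mul_eq_zero.mp hk).resolve_left hq
    refine O.mem_span_X_pow_iff.mpr fun i hi => ?_
    rcases lt_or_eq_of_le (Nat.le_of_lt_succ hi) with hi | rfl
    · exact O.coeff_mul_X_pow_of_lt g hi
    · rw [coeff_mul_X_pow_self, hg0]

theorem mem_span_X_pow_of_isBound {f z : R} {a : D} (ha : a ≠ 0) {m : ℕ} (hm : 1 ≤ m)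
    (hz : z ∈ Subring.center R) (hz0 : O.e z 0 ≠ 0)
    (hb : IsBound f (O.C a * z * O.X ^ m)) : f ∈ Ideal.span {O.X ^ m} := by
  obtain ⟨hle, -, hmax⟩ := hb
  have hbX : O.C a * z * O.X ^ m ∈ Ideal.span {O.X ^ m} :=
    Ideal.mul_mem_left _ _ (Ideal.mem_span_singleton_self _)
  obtain ⟨q, hq⟩ := Ideal.mem_span_singleton'.mp (hle (Ideal.mem_span_singleton_self _))
  rcases ne_or_eq (O.e q 0) 0 with hq0 | hq0
  · exact O.mem_span_X_pow_of_mul_mem hq0 (hq ▸ hbX)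
  obtain ⟨q', rfl⟩ := Ideal.mem_span_singleton'.mp <|
    (O.mem_span_X_pow_iff (k := 1)).mpr fun i hi => by rwa [Nat.lt_one_iff.mp hi]
  obtain ⟨q'', hq''⟩ := O.isNormalElement_X.2 q'
  set c := O.C (σ.symm a) * z * O.X ^ (m - 1)
  have hXc : O.X * c = O.C a * z * O.X ^ m := by
    rw [← mul_assoc, ← mul_assoc, X_mul_C', RingEquiv.apply_symm_apply, mul_assoc _ O.X,
      Subring.mem_center_iff.mp hz O.X, ← mul_assoc, mul_assoc _ O.X, ← pow_succ',
      Nat.sub_add_cancel hm]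
  have hcf : c = q'' * f := O.isLeftRegular_X <| show O.X * c = O.X * (q'' * f) by
    rw [hXc, ← hq, pow_one, hq'', mul_assoc]
  have hc_two : IsTwoSidedIdeal' (Ideal.span {c}) :=
    isTwoSidedIdeal'_span_mul_normal
      (isTwoSidedIdeal'_span_unit_mul_central ((isUnit_iff_ne_zero.mpr
        ((map_ne_zero σ.symm).mpr ha)).map O.C) hz)
      (O.isNormalElement_X.pow _)
  have hc_le : Ideal.span {c} ≤ Ideal.span {f} :=
    Ideal.span_le.mpr <| Set.singleton_subset_iff.mpr <|
      Ideal.mem_span_singleton'.mpr ⟨q'', hcf.symm⟩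
  have hcX : c ∈ Ideal.span {O.X ^ m} :=
    Ideal.span_le.mpr (Set.singleton_subset_iff.mpr hbX)
      (hmax _ hc_two hc_le (Ideal.mem_span_singleton_self c))
  have hc_coeff := O.mem_span_X_pow_iff.mp hcX (m - 1) (by omega)
  rw [coeff_mul_X_pow_self, coeff_C_mul] at hc_coeff
  exact absurd hc_coeff (mul_ne_zero ((map_ne_zero σ.symm).mpr ha) hz0)

end OreExt

theorem X_pow_right_factor_general {D R : Type*} [DivisionRing D] [Ring R] (σ : D ≃+* D)
    (O : OreExt D σ (fun _ => 0) R) (f : R)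
    (d : D) (hd : d ≠ 0) (m : ℕ) (hm : 1 ≤ m)
    (ghat : R) (hghatC : ghat ∈ Subring.center R) (hconst : O.e ghat 0 ≠ 0)
    (hb : IsBound f (O.C d * O.X ^ m * ghat)) :
    ∃ g : R, f = g * O.X ^ m ∧ IsBound g (O.C d * ghat) := by
  rw [mul_assoc, Subring.mem_center_iff.mp hghatC, ← mul_assoc] at hb
  obtain ⟨g, rfl⟩ :=
    Ideal.mem_span_singleton'.mp (O.mem_span_X_pow_of_isBound hd hm hghatC hconst hb)
  exact ⟨g, rfl, hb.of_mul_right (O.isNormalElement_X.pow m) (O.isRightRegular_X_pow m)⟩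

/-- in `R = D[X;σ]`, if the bound of `f` is `d·X^m·ĝ` with `d ∈ D`
nonzero, `m ≥ 1` and `ĝ` central with nonzero constant term, then `f = g·X^m` for some
`g` whose bound is `d·ĝ`. -/
theorem X_pow_right_factor {D R : Type*} [DivisionRing D] [Ring R] (σ : D ≃+* D)
    (O : OreExt D σ (fun _ => 0) R) (f : R) (hf : f ≠ 0)
    (d : D) (hd : d ≠ 0) (m : ℕ) (hm : 1 ≤ m)
    (ghat : R) (hghatC : ghat ∈ Subring.center R) (hconst : O.e ghat 0 ≠ 0)
    (hb : IsBound f (O.C d * O.X ^ m * ghat)) :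
    ∃ g : R, f = g * O.X ^ m ∧ IsBound g (O.C d * ghat) :=
  X_pow_right_factor_general σ O f d hd m hm ghat hghatC hconst hb
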